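/- (Completeness) Suppose the tableau for an input formula θ is built using the specific restrictive cut conditions (C1) and (C2). If the final tableau T^θ is open, then θ is satisfiable in a CMAEM. -/
import Mathlib


set_option autoImplicit false

/-- A coalition is a nonempty finite set of agents. -/
abbrev Coalition (Agent : Type) : Type := {A : Finset Agent // A.Nonempty}

/-- Formulas of the logic CMAEL(CD). -/
inductive Formula (Agent AP : Type) : Type where
  | atom : AP → Formula Agent AP
  | neg  : Formula Agent AP → Formula Agent AP
  | conj : Formula Agent AP → Formula Agent AP → Formula Agent AP
  | D    : Coalition Agent → Formula Agent AP → Formula Agent AP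
  | C    : Coalition Agent → Formula Agent AP → Formula Agent AP

/-- The singleton coalition `{a}`. -/
def single {Agent : Type} (a : Agent) : Coalition Agent :=
  ⟨{a}, Finset.singleton_nonempty a⟩

/-- A coalitional multiagent epistemic pseudo-model (pseudo-CMAEM):
each `RD A` is an equivalence relation, and `RD A ⊆ RD B` whenever `B ⊆ A`. -/
structure PseudoCMAEM (Agent AP : Type) where
  State : Type
  nonempty : Nonempty State
  RD : Coalition Agent → State → State → Prop
  equiv : ∀ A, Equivalence (RD A)
  mono : ∀ (A B : Coalition Agent), B.1 ⊆ A.1 → ∀ s t, RD A s t → RD B s t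
  label : State → Set AP

namespace PseudoCMAEM

variable {Agent AP : Type}

/-- `RC A` is the reflexive-transitive closure of `⋃_{∅ ≠ B ⊆ A} RD B`. -/
def RC (M : PseudoCMAEM Agent AP) (A : Coalition Agent) : M.State → M.State → Prop :=
  Relation.ReflTransGen (fun s t => ∃ B : Coalition Agent, B.1 ⊆ A.1 ∧ M.RD B s t)

/-- Truth at a state (standard Kripke clauses). -/
def sat (M : PseudoCMAEM Agent AP) : M.State → Formula Agent AP → Prop
  | s, .atom p => p ∈ M.label s
  | s, .neg φ => ¬ sat M s φ
  | s, .conj φ ψ => sat M s φ ∧ sat M s ψ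
  | s, .D A φ => ∀ t, M.RD A s t → sat M t φ
  | s, .C A φ => ∀ t, M.RC A s t → sat M t φ

/-- `t` is `A`-reachable from `s`: `s = t` or a finite chain of single-agent `RD` steps
with agents from `A`. -/
def AReach (M : PseudoCMAEM Agent AP) (A : Coalition Agent) : M.State → M.State → Prop :=
  Relation.ReflTransGen (fun s t => ∃ a ∈ A.1, M.RD (single a) s t)

end PseudoCMAEM

/-- A coalitional multiagent epistemic model (CMAEM): additionally
`RD A = ⋂_{a ∈ A} RD {a}`. -/
structure CMAEM (Agent AP : Type) extends PseudoCMAEM Agent AP where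
  inter : ∀ (A : Coalition Agent) (s t : State), RD A s t ↔ ∀ a ∈ A.1, RD (single a) s t

namespace CMAEM

variable {Agent AP : Type}

abbrev sat (M : CMAEM Agent AP) : M.State → Formula Agent AP → Prop :=
  M.toPseudoCMAEM.sat

abbrev RC (M : CMAEM Agent AP) : Coalition Agent → M.State → M.State → Prop :=
  M.toPseudoCMAEM.RC

end CMAEM

/-- `AlphaComp χ ψ` : `ψ` is an α-component of the α-formula `χ`. -/
inductive AlphaComp {Agent AP : Type} : Formula Agent AP → Formula Agent AP → Prop where
  | negneg (φ : Formula Agent AP) : AlphaComp (.neg (.neg φ)) φ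
  | conjL (φ ψ : Formula Agent AP) : AlphaComp (.conj φ ψ) φ
  | conjR (φ ψ : Formula Agent AP) : AlphaComp (.conj φ ψ) ψ
  | dSelf (A : Coalition Agent) (φ : Formula Agent AP) : AlphaComp (.D A φ) (.D A φ)
  | dComp (A : Coalition Agent) (φ : Formula Agent AP) : AlphaComp (.D A φ) φ
  | cComp (A : Coalition Agent) (φ : Formula Agent AP) : AlphaComp (.C A φ) φ
  | cD (A : Coalition Agent) (φ : Formula Agent AP) {a : Agent} (ha : a ∈ A.1) :
      AlphaComp (.C A φ) (.D (single a) (.C A φ))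

/-- α-formulas: `¬¬φ`, `φ∧ψ`, `D_A φ`, `C_A φ`. -/
def IsAlpha {Agent AP : Type} : Formula Agent AP → Prop
  | .neg (.neg _) => True
  | .conj _ _ => True
  | .D _ _ => True
  | .C _ _ => True
  | _ => False

/-- `BetaComp χ ψ` : `ψ` is a β-component of the β-formula `χ`. -/
inductive BetaComp {Agent AP : Type} : Formula Agent AP → Formula Agent AP → Prop where
  | nconjL (φ ψ : Formula Agent AP) : BetaComp (.neg (.conj φ ψ)) (.neg φ)
  | nconjR (φ ψ : Formula Agent AP) : BetaComp (.neg (.conj φ ψ)) (.neg ψ)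
  | ncComp (A : Coalition Agent) (φ : Formula Agent AP) : BetaComp (.neg (.C A φ)) (.neg φ)
  | ncD (A : Coalition Agent) (φ : Formula Agent AP) {a : Agent} (ha : a ∈ A.1) :
      BetaComp (.neg (.C A φ)) (.neg (.D (single a) (.C A φ)))

/-- β-formulas: `¬(φ∧ψ)`, `¬C_A φ`. -/
def IsBeta {Agent AP : Type} : Formula Agent AP → Prop
  | .neg (.conj _ _) => True
  | .neg (.C _ _) => True
  | _ => False

section SetsOfFormulas

variable {Agent AP : Type}

/-- A set of formulas is patently inconsistent if it contains a pair `φ`, `¬φ`. -/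
def PatInc (Δ : Set (Formula Agent AP)) : Prop := ∃ φ, φ ∈ Δ ∧ Formula.neg φ ∈ Δ

/-- Fully expanded set of formulas. -/
def FullyExpandedSet (Δ : Set (Formula Agent AP)) : Prop :=
  ¬ PatInc Δ ∧
  (∀ χ ∈ Δ, ∀ ψ, AlphaComp χ ψ → ψ ∈ Δ) ∧
  (∀ χ ∈ Δ, IsBeta χ → ∃ ψ, BetaComp χ ψ ∧ ψ ∈ Δ)

/-- The subformulas of a formula. -/
def subf : Formula Agent AP → Set (Formula Agent AP)
  | .atom p => {Formula.atom p}
  | .neg φ => insert (Formula.neg φ) (subf φ)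
  | .conj φ ψ => insert (Formula.conj φ ψ) (subf φ ∪ subf ψ)
  | .D A φ => insert (Formula.D A φ) (subf φ)
  | .C A φ => insert (Formula.C A φ) (subf φ)

end SetsOfFormulas

section Expansion

variable {Agent AP : Type}

/-- One set-replacement step of the procedure `FullExpansion`, acting on a family of sets
of formulas; patently inconsistent sets are discarded immediately. -/
inductive FEStep : Set (Set (Formula Agent AP)) → Set (Set (Formula Agent AP)) → Prop where
  | alpha {F : Set (Set (Formula Agent AP))} {Φ : Set (Formula Agent AP)}
      {χ : Formula Agent AP} (hΦ : Φ ∈ F) (hχ : χ ∈ Φ) (hα : IsAlpha χ) :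
      FEStep F ((F \ {Φ}) ∪ {Δ | Δ = Φ ∪ {ψ | AlphaComp χ ψ} ∧ ¬ PatInc Δ})
  | beta {F : Set (Set (Formula Agent AP))} {Φ : Set (Formula Agent AP)}
      {χ : Formula Agent AP} (hΦ : Φ ∈ F) (hχ : χ ∈ Φ) (hβ : IsBeta χ)
      (hnone : ∀ ψ, BetaComp χ ψ → ψ ∉ Φ) :
      FEStep F ((F \ {Φ}) ∪ {Δ | (∃ ψ, BetaComp χ ψ ∧ Δ = insert ψ Φ) ∧ ¬ PatInc Δ})
  | ev {F : Set (Set (Formula Agent AP))} {Φ : Set (Formula Agent AP)}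
      {A : Coalition Agent} {φ : Formula Agent AP}
      (hΦ : Φ ∈ F) (hχ : Formula.neg (.C A φ) ∈ Φ) (hnφ : Formula.neg φ ∉ Φ)
      (hother : ∃ ψ, BetaComp (Formula.neg (.C A φ)) ψ ∧ ψ ≠ Formula.neg φ ∧ ψ ∈ Φ) :
      FEStep F (F ∪ {Δ | Δ = insert (Formula.neg φ) Φ ∧ ¬ PatInc Δ})

/-- The starting family of the expansion procedure: `{Γ}`, unless `Γ` is
patently inconsistent, in which case the empty family. -/
def feInit (Γ : Set (Formula Agent AP)) : Set (Set (Formula Agent AP)) :=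
  {Δ | Δ = Γ ∧ ¬ PatInc Γ}

/-- Type of restrictive cut conditions: a condition on the cut formula, the host formula
it is a subformula of, and the current set. -/
abbrev CutCond (Agent AP : Type) : Type :=
  Formula Agent AP → Formula Agent AP → Set (Formula Agent AP) → Prop

/-- One step of the cut-saturated-expansion procedure: a `FEStep`, or a cut on a
subformula `D_A φ` (resp. `C_A φ`) of a member formula, when `C1` (resp. `C2`) holds. -/
inductive CSEStep (C1 C2 : CutCond Agent AP) :
    Set (Set (Formula Agent AP)) → Set (Set (Formula Agent AP)) → Prop where
  | fe {F F' : Set (Set (Formula Agent AP))} : FEStep F F' → CSEStep C1 C2 F F'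
  | cutD {F : Set (Set (Formula Agent AP))} {Φ : Set (Formula Agent AP)}
      {ψ : Formula Agent AP} {A : Coalition Agent} {φ : Formula Agent AP}
      (hΦ : Φ ∈ F) (hψ : ψ ∈ Φ) (hsub : Formula.D A φ ∈ subf ψ)
      (hc : C1 (Formula.D A φ) ψ Φ) :
      CSEStep C1 C2 F ((F \ {Φ}) ∪
        {Δ | (Δ = insert (Formula.D A φ) Φ ∨ Δ = insert (Formula.neg (Formula.D A φ)) Φ) ∧
              ¬ PatInc Δ})
  | cutC {F : Set (Set (Formula Agent AP))} {Φ : Set (Formula Agent AP)}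
      {ψ : Formula Agent AP} {A : Coalition Agent} {φ : Formula Agent AP}
      (hΦ : Φ ∈ F) (hψ : ψ ∈ Φ) (hsub : Formula.C A φ ∈ subf ψ)
      (hc : C2 (Formula.C A φ) ψ Φ) :
      CSEStep C1 C2 F ((F \ {Φ}) ∪
        {Δ | (Δ = insert (Formula.C A φ) Φ ∨ Δ = insert (Formula.neg (Formula.C A φ)) Φ) ∧
              ¬ PatInc Δ})

/-- The cut-saturated expansions of `Γ`: members of a family reachable from `{Γ}` by
`CSEStep`s on which no `CSEStep` has any further effect (saturation). -/
def CSE (C1 C2 : CutCond Agent AP) (Γ : Set (Formula Agent AP)) :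
    Set (Set (Formula Agent AP)) :=
  {Δ | ∃ F, Relation.ReflTransGen (CSEStep C1 C2) (feInit Γ) F ∧
        (∀ F', CSEStep C1 C2 F F' → F' = F) ∧ Δ ∈ F}

end Expansion

section Hintikka

variable {Agent AP : Type}

/-- The relation `R^C_A` determined by a family of relations `RD`. -/
def RCof {State : Type} (RD : Coalition Agent → State → State → Prop)
    (A : Coalition Agent) : State → State → Prop :=
  Relation.ReflTransGen (fun s t => ∃ B : Coalition Agent, B.1 ⊆ A.1 ∧ RD B s t)

end Hintikka

/-- A coalitional multiagent epistemic Hintikka structure (CMAEHS). -/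
structure CMAEHS (Agent AP : Type) where
  State : Type
  nonempty : Nonempty State
  RD : Coalition Agent → State → State → Prop
  H : State → Set (Formula Agent AP)
  ch1 : ∀ s, FullyExpandedSet (H s)
  ch2 : ∀ s (A : Coalition Agent) (φ : Formula Agent AP),
      Formula.neg (.D A φ) ∈ H s → ∃ t, RD A s t ∧ Formula.neg φ ∈ H t
  ch3 : ∀ s s' (A : Coalition Agent), RD A s s' →
      ∀ (B : Coalition Agent), B.1 ⊆ A.1 →
      ∀ φ : Formula Agent AP, (Formula.D B φ ∈ H s ↔ Formula.D B φ ∈ H s')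
  ch4 : ∀ s (A : Coalition Agent) (φ : Formula Agent AP),
      Formula.neg (.C A φ) ∈ H s → ∃ t, RCof RD A s t ∧ Formula.neg φ ∈ H t

section Tableau

variable {Agent AP : Type}

/-- The prestate created by rule `DR` from a state `Δ` and a formula `¬D_A φ ∈ Δ`. -/
def DRset (A : Coalition Agent) (φ : Formula Agent AP) (Δ : Set (Formula Agent AP)) :
    Set (Formula Agent AP) :=
  ({Formula.neg φ} : Set (Formula Agent AP)) ∪
  {χ ∈ Δ | ∃ (A' : Coalition Agent) (ψ : Formula Agent AP),
      χ = Formula.D A' ψ ∧ A'.1 ⊆ A.1} ∪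
  {χ ∈ Δ | ∃ (A' : Coalition Agent) (ψ : Formula Agent AP),
      χ = Formula.neg (Formula.D A' ψ) ∧ A'.1 ⊆ A.1 ∧
      χ ≠ Formula.neg (Formula.D A φ)} ∪
  {χ ∈ Δ | ∃ (A' : Coalition Agent) (ψ : Formula Agent AP),
      χ = Formula.neg (Formula.C A' ψ) ∧ ∃ a, a ∈ A'.1 ∧ a ∈ A.1}

mutual
  /-- The prestates of the pretableau for input formula `θ`. -/
  inductive IsPrestate (C1 C2 : CutCond Agent AP) (θ : Formula Agent AP) :
      Set (Formula Agent AP) → Prop where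
    | init : IsPrestate C1 C2 θ {θ}
    | dr {Δ : Set (Formula Agent AP)} {A : Coalition Agent} {φ : Formula Agent AP} :
        IsState C1 C2 θ Δ → Formula.neg (.D A φ) ∈ Δ →
        IsPrestate C1 C2 θ (DRset A φ Δ)

  /-- The states of the pretableau for input formula `θ` (rule `SR`). -/
  inductive IsState (C1 C2 : CutCond Agent AP) (θ : Formula Agent AP) :
      Set (Formula Agent AP) → Prop where
    | sr {Γ Δ : Set (Formula Agent AP)} :
        IsPrestate C1 C2 θ Γ → Δ ∈ CSE C1 C2 Γ → IsState C1 C2 θ Δ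
end

/-- The arrow `Δ →^{¬D_A φ} Δ'` of the initial tableau `T_0^θ`
(obtained from `Δ →^{¬D_A φ} Γ ⇢ Δ'` by prestate elimination). -/
def InitArrow (C1 C2 : CutCond Agent AP) (θ : Formula Agent AP)
    (Δ : Set (Formula Agent AP)) (A : Coalition Agent) (φ : Formula Agent AP)
    (Δ' : Set (Formula Agent AP)) : Prop :=
  IsState C1 C2 θ Δ ∧ Formula.neg (.D A φ) ∈ Δ ∧ Δ' ∈ CSE C1 C2 (DRset A φ Δ)

/-- A path realizing the eventuality `¬C_A φ` at a state, within the set `S` of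
(surviving) states, all of whose nodes satisfy the predicate `P`. -/
inductive RealizePath (C1 C2 : CutCond Agent AP) (θ : Formula Agent AP)
    (S : Set (Set (Formula Agent AP))) (P : Set (Formula Agent AP) → Prop)
    (A : Coalition Agent) (φ : Formula Agent AP) : Set (Formula Agent AP) → Prop where
  | base {Δ : Set (Formula Agent AP)} (hS : Δ ∈ S) (hP : P Δ)
      (h : Formula.neg φ ∈ Δ) : RealizePath C1 C2 θ S P A φ Δ
  | step {Δ Δ' : Set (Formula Agent AP)} (hS : Δ ∈ S) (hP : P Δ)
      (hev : Formula.neg (.C A φ) ∈ Δ) {a : Agent} (ha : a ∈ A.1)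
      {ψ : Formula Agent AP} (harr : InitArrow C1 C2 θ Δ (single a) ψ Δ')
      (h : RealizePath C1 C2 θ S P A φ Δ') : RealizePath C1 C2 θ S P A φ Δ

/-- One state-elimination step (rule `E1` or rule `E2`). -/
inductive ElimStep (C1 C2 : CutCond Agent AP) (θ : Formula Agent AP) :
    Set (Set (Formula Agent AP)) → Set (Set (Formula Agent AP)) → Prop where
  | e1 {S : Set (Set (Formula Agent AP))} {Δ : Set (Formula Agent AP)}
      {A : Coalition Agent} {φ : Formula Agent AP}
      (hΔ : Δ ∈ S) (hin : Formula.neg (.D A φ) ∈ Δ)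
      (hno : ∀ Δ' ∈ S, ¬ InitArrow C1 C2 θ Δ A φ Δ') :
      ElimStep C1 C2 θ S (S \ {Δ})
  | e2 {S : Set (Set (Formula Agent AP))} {Δ : Set (Formula Agent AP)}
      {A : Coalition Agent} {φ : Formula Agent AP}
      (hΔ : Δ ∈ S) (hin : Formula.neg (.C A φ) ∈ Δ)
      (hno : ¬ RealizePath C1 C2 θ S (fun _ => True) A φ Δ) :
      ElimStep C1 C2 θ S (S \ {Δ})

/-- `S` is the set of states of the final tableau `T^θ`: obtained from the states of the
initial tableau `T_0^θ` by state-elimination steps, with no further step applicable. -/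
def FinalTableau (C1 C2 : CutCond Agent AP) (θ : Formula Agent AP)
    (S : Set (Set (Formula Agent AP))) : Prop :=
  Relation.ReflTransGen (ElimStep C1 C2 θ) {Δ | IsState C1 C2 θ Δ} S ∧
  ∀ S', ¬ ElimStep C1 C2 θ S S'

/-- A set of formulas satisfiable (at a single state) in some CMAEM. -/
def SatSet (Δ : Set (Formula Agent AP)) : Prop :=
  ∃ (M : CMAEM Agent AP) (s : M.State), ∀ χ ∈ Δ, M.sat s χ

/-- The specific restrictive condition (C1) for cuts on `D_A φ`. -/
def specC1 : CutCond Agent AP := fun χ ψ Δ =>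
  ∃ (A : Coalition Agent) (φ : Formula Agent AP), χ = Formula.D A φ ∧
    ((∃ (B : Coalition Agent) (δ : Formula Agent AP),
        (ψ = Formula.D B δ ∨ ψ = Formula.neg (Formula.D B δ)) ∧
        ∃ (E : Coalition Agent) (ε : Formula Agent AP),
          Formula.neg (Formula.D E ε) ∈ Δ ∧ A.1 ⊆ E.1 ∧ B.1 ⊆ E.1) ∨
     (∃ (B : Coalition Agent) (δ : Formula Agent AP),
        ψ = Formula.neg (Formula.C B δ) ∧
        ∃ (E : Coalition Agent) (ε : Formula Agent AP),
          Formula.neg (Formula.D E ε) ∈ Δ ∧ A.1 ⊆ E.1 ∧ ∃ a, a ∈ B.1 ∧ a ∈ E.1))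

/-- The specific restrictive condition (C2) for cuts on `C_A φ`. -/
def specC2 : CutCond Agent AP := fun χ ψ Δ =>
  ∃ (A : Coalition Agent) (φ : Formula Agent AP), χ = Formula.C A φ ∧
    ((∃ (B : Coalition Agent) (δ : Formula Agent AP),
        (ψ = Formula.D B δ ∨ ψ = Formula.neg (Formula.D B δ)) ∧
        ∃ (E : Coalition Agent) (ε : Formula Agent AP),
          Formula.neg (Formula.D E ε) ∈ Δ ∧ B.1 ⊆ E.1 ∧ ∃ a, a ∈ A.1 ∧ a ∈ E.1) ∨
     (∃ (B : Coalition Agent) (δ : Formula Agent AP),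
        ψ = Formula.neg (Formula.C B δ) ∧
        ∃ (E : Coalition Agent) (ε : Formula Agent AP),
          Formula.neg (Formula.D E ε) ∈ Δ ∧ (∃ a, a ∈ A.1 ∧ a ∈ E.1) ∧
          ∃ a, a ∈ B.1 ∧ a ∈ E.1))

end Tableau

section Closure

variable {Agent AP : Type}

/-- The closure `cl(θ)`: smallest set containing `θ`, closed under α- and β-components,
and containing `¬ψ` whenever `¬D_A ψ` is in it. -/
inductive Closure (θ : Formula Agent AP) : Formula Agent AP → Prop where
  | base : Closure θ θ
  | alpha {χ ψ : Formula Agent AP} : Closure θ χ → AlphaComp χ ψ → Closure θ ψ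
  | beta {χ ψ : Formula Agent AP} : Closure θ χ → BetaComp χ ψ → Closure θ ψ
  | negD {A : Coalition Agent} {ψ : Formula Agent AP} :
      Closure θ (Formula.neg (.D A ψ)) → Closure θ (Formula.neg ψ)

/-- The extended closure `ecl(θ)`: smallest set containing `χ` and `¬χ`
for every `χ ∈ cl(θ)`. -/
def ecl (θ : Formula Agent AP) : Set (Formula Agent AP) :=
  {φ | ∃ χ, Closure θ χ ∧ (φ = χ ∨ φ = Formula.neg χ)}

/-- The length of a formula. -/
def Formula.length : Formula Agent AP → ℕ
  | .atom _ => 1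
  | .neg φ => φ.length + 1
  | .conj φ ψ => φ.length + ψ.length + 1
  | .D _ φ => φ.length + 1
  | .C _ φ => φ.length + 1

/-- The agents occurring in a formula. -/
def Formula.agents [DecidableEq Agent] : Formula Agent AP → Finset Agent
  | .atom _ => ∅
  | .neg φ => φ.agents
  | .conj φ ψ => φ.agents ∪ ψ.agents
  | .D A φ => A.1 ∪ φ.agents
  | .C A φ => A.1 ∪ φ.agents

end Closure

/-- The extended labeling `L⁺` of a CMAEM: `L⁺(s) = {φ | M,s ⊨ φ}`. -/
def extLabel {Agent AP : Type} (M : CMAEM Agent AP) (s : M.State) :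
    Set (Formula Agent AP) :=
  {φ | M.sat s φ}
section Aux
variable {Agent AP : Type}

lemma Formula.length_pos (φ : Formula Agent AP) : 0 < φ.length := by
  cases φ <;> simp [Formula.length]

lemma mem_subf_self (ξ : Formula Agent AP) : ξ ∈ subf ξ := by
  cases ξ <;> simp [subf]

lemma subf_trans : ∀ {ξ ζ : Formula Agent AP}, ζ ∈ subf ξ → subf ζ ⊆ subf ξ := by
  intro ξ
  induction ξ with
  | atom p =>
      intro ζ h
      simp only [subf, Set.mem_singleton_iff] at h
      subst h; exact subset_rfl
  | neg φ ih =>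
      intro ζ h
      rcases (by simpa [subf] using h : ζ = Formula.neg φ ∨ ζ ∈ subf φ) with rfl | h'
      · exact subset_rfl
      · exact (ih h').trans (Set.subset_insert _ _)
  | conj φ ψ ih1 ih2 =>
      intro ζ h
      rcases (by simpa [subf] using h : ζ = Formula.conj φ ψ ∨ ζ ∈ subf φ ∨ ζ ∈ subf ψ) with rfl | h' | h'
      · exact subset_rfl
      · exact ((ih1 h').trans (Set.subset_union_left)).trans (Set.subset_insert _ _)
      · exact ((ih2 h').trans (Set.subset_union_right)).trans (Set.subset_insert _ _)
  | D A φ ih =>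
      intro ζ h
      rcases (by simpa [subf] using h : ζ = Formula.D A φ ∨ ζ ∈ subf φ) with rfl | h'
      · exact subset_rfl
      · exact (ih h').trans (Set.subset_insert _ _)
  | C A φ ih =>
      intro ζ h
      rcases (by simpa [subf] using h : ζ = Formula.C A φ ∨ ζ ∈ subf φ) with rfl | h'
      · exact subset_rfl
      · exact (ih h').trans (Set.subset_insert _ _)

lemma alphaComp_isAlpha {χ ψ : Formula Agent AP} (h : AlphaComp χ ψ) : IsAlpha χ := by
  cases h <;> trivial

/-- Generic induction principle over the CSE construction. -/
lemma cse_mem_prop {C1 C2 : CutCond Agent AP} {Γ Δ : Set (Formula Agent AP)}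
    (P : Set (Formula Agent AP) → Prop)
    (hinit : ¬ PatInc Γ → P Γ)
    (hstep : ∀ F F', CSEStep C1 C2 F F' → (∀ Φ ∈ F, P Φ) → ∀ Φ ∈ F', P Φ)
    (h : Δ ∈ CSE C1 C2 Γ) : P Δ := by
  obtain ⟨F, hreach, -, hΔ⟩ := h
  suffices hall : ∀ Φ ∈ F, P Φ from hall _ hΔ
  clear hΔ
  induction hreach with
  | refl =>
      intro Φ hΦ
      obtain ⟨rfl, hpi⟩ := hΦ
      exact hinit hpi
  | tail _ hst ih => exact hstep _ _ hst ih

/-- Description of the members of the result of a `CSEStep`. -/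
lemma csestep_mem {C1 C2 : CutCond Agent AP} {F F' : Set (Set (Formula Agent AP))}
    (h : CSEStep C1 C2 F F') :
    ∀ Φ ∈ F', Φ ∈ F ∨ ∃ Φ0 ∈ F, Φ0 ⊆ Φ ∧ ¬ PatInc Φ ∧
      ∀ ξ ∈ Φ, ξ ∈ Φ0 ∨
        (∃ χ ∈ Φ0, AlphaComp χ ξ) ∨
        (∃ χ ∈ Φ0, BetaComp χ ξ) ∨
        (∃ (A : Coalition Agent) (φ : Formula Agent AP),
           Formula.neg (Formula.C A φ) ∈ Φ0 ∧ ξ = Formula.neg φ) ∨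
        (∃ ψ ∈ Φ0, ∃ (A : Coalition Agent) (φ : Formula Agent AP),
           Formula.D A φ ∈ subf ψ ∧ (ξ = Formula.D A φ ∨ ξ = Formula.neg (Formula.D A φ))) ∨
        (∃ ψ ∈ Φ0, ∃ (A : Coalition Agent) (φ : Formula Agent AP),
           Formula.C A φ ∈ subf ψ ∧ (ξ = Formula.C A φ ∨ ξ = Formula.neg (Formula.C A φ))) := by
  cases h with
  | fe hfe =>
      cases hfe with
      | @alpha Φ0 χ hΦ0 hχ hα =>
          intro Φ hΦ
          rcases hΦ with hΦ | ⟨rfl, hpi⟩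
          · exact Or.inl hΦ.1
          · refine Or.inr ⟨Φ0, hΦ0, Set.subset_union_left, hpi, ?_⟩
            intro ξ hξ
            rcases hξ with hξ | hξ
            · exact Or.inl hξ
            · exact Or.inr (Or.inl ⟨χ, hχ, hξ⟩)
      | @beta Φ0 χ hΦ0 hχ hβ hnone =>
          intro Φ hΦ
          rcases hΦ with hΦ | ⟨⟨ψ, hψc, rfl⟩, hpi⟩
          · exact Or.inl hΦ.1
          · refine Or.inr ⟨Φ0, hΦ0, Set.subset_insert _ _, hpi, ?_⟩
            intro ξ hξ
            rcases hξ with rfl | hξ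
            · exact Or.inr (Or.inr (Or.inl ⟨χ, hχ, hψc⟩))
            · exact Or.inl hξ
      | @ev Φ0 A φ hΦ0 hχ hnφ hother =>
          intro Φ hΦ
          rcases hΦ with hΦ | ⟨rfl, hpi⟩
          · exact Or.inl hΦ
          · refine Or.inr ⟨Φ0, hΦ0, Set.subset_insert _ _, hpi, ?_⟩
            intro ξ hξ
            rcases hξ with rfl | hξ
            · exact Or.inr (Or.inr (Or.inr (Or.inl ⟨A, φ, hχ, rfl⟩)))
            · exact Or.inl hξ
  | @cutD Φ0 ψ A φ hΦ0 hψ hsub hc =>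
      intro Φ hΦ
      rcases hΦ with hΦ | ⟨heq, hpi⟩
      · exact Or.inl hΦ.1
      · rcases heq with rfl | rfl
        · refine Or.inr ⟨Φ0, hΦ0, Set.subset_insert _ _, hpi, ?_⟩
          intro ξ hξ
          rcases hξ with rfl | hξ
          · exact Or.inr (Or.inr (Or.inr (Or.inr (Or.inl ⟨ψ, hψ, A, φ, hsub, Or.inl rfl⟩))))
          · exact Or.inl hξ
        · refine Or.inr ⟨Φ0, hΦ0, Set.subset_insert _ _, hpi, ?_⟩
          intro ξ hξ
          rcases hξ with rfl | hξ
          · exact Or.inr (Or.inr (Or.inr (Or.inr (Or.inl ⟨ψ, hψ, A, φ, hsub, Or.inr rfl⟩))))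
          · exact Or.inl hξ
  | @cutC Φ0 ψ A φ hΦ0 hψ hsub hc =>
      intro Φ hΦ
      rcases hΦ with hΦ | ⟨heq, hpi⟩
      · exact Or.inl hΦ.1
      · rcases heq with rfl | rfl
        · refine Or.inr ⟨Φ0, hΦ0, Set.subset_insert _ _, hpi, ?_⟩
          intro ξ hξ
          rcases hξ with rfl | hξ
          · exact Or.inr (Or.inr (Or.inr (Or.inr (Or.inr ⟨ψ, hψ, A, φ, hsub, Or.inl rfl⟩))))
          · exact Or.inl hξ
        · refine Or.inr ⟨Φ0, hΦ0, Set.subset_insert _ _, hpi, ?_⟩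
          intro ξ hξ
          rcases hξ with rfl | hξ
          · exact Or.inr (Or.inr (Or.inr (Or.inr (Or.inr ⟨ψ, hψ, A, φ, hsub, Or.inr rfl⟩))))
          · exact Or.inl hξ

lemma cse_props {C1 C2 : CutCond Agent AP} {Γ Δ : Set (Formula Agent AP)}
    (h : Δ ∈ CSE C1 C2 Γ) : Γ ⊆ Δ ∧ ¬ PatInc Δ := by
  refine cse_mem_prop (fun Φ => Γ ⊆ Φ ∧ ¬ PatInc Φ) (fun hpi => ⟨subset_rfl, hpi⟩) ?_ h
  intro F F' hst ih Φ hΦ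
  rcases csestep_mem hst Φ hΦ with hΦF | ⟨Φ0, hΦ0, hsub, hpi, -⟩
  · exact ih _ hΦF
  · exact ⟨(ih _ hΦ0).1.trans hsub, hpi⟩
/-- Cut-saturation for D-formulas under cut condition `C1`. -/
def CutSatD (C1 : CutCond Agent AP) (Δ : Set (Formula Agent AP)) : Prop :=
  ∀ ψ ∈ Δ, ∀ (A : Coalition Agent) (φ : Formula Agent AP),
    Formula.D A φ ∈ subf ψ → C1 (Formula.D A φ) ψ Δ →
    Formula.D A φ ∈ Δ ∨ Formula.neg (Formula.D A φ) ∈ Δ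

/-- Cut-saturation for C-formulas under cut condition `C2`. -/
def CutSatC (C2 : CutCond Agent AP) (Δ : Set (Formula Agent AP)) : Prop :=
  ∀ ψ ∈ Δ, ∀ (A : Coalition Agent) (φ : Formula Agent AP),
    Formula.C A φ ∈ subf ψ → C2 (Formula.C A φ) ψ Δ →
    Formula.C A φ ∈ Δ ∨ Formula.neg (Formula.C A φ) ∈ Δ

lemma cse_state_props {C1 C2 : CutCond Agent AP} {Γ Δ : Set (Formula Agent AP)}
    (h : Δ ∈ CSE C1 C2 Γ) :
    FullyExpandedSet Δ ∧ CutSatD C1 Δ ∧ CutSatC C2 Δ := by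
  obtain ⟨F, hreach, hsat, hΔ⟩ := h
  have hpi : ¬ PatInc Δ := (cse_props ⟨F, hreach, hsat, hΔ⟩).2
  refine ⟨⟨hpi, ?_, ?_⟩, ?_, ?_⟩
  · -- α-closure
    intro χ hχ ψ hcomp
    have heq := hsat _ (CSEStep.fe (FEStep.alpha hΔ hχ (alphaComp_isAlpha hcomp)))
    have hΔ' : Δ ∈ (F \ {Δ}) ∪
        {Δ' | Δ' = Δ ∪ {ψ | AlphaComp χ ψ} ∧ ¬ PatInc Δ'} := heq.symm ▸ hΔ
    rcases hΔ' with hd | ⟨he, -⟩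
    · exact absurd rfl hd.2
    · have : ψ ∈ Δ ∪ {ψ | AlphaComp χ ψ} := Or.inr hcomp
      rwa [← he] at this
  · -- β-closure
    intro χ hχ hβ
    by_contra hno
    push_neg at hno
    have hnone : ∀ ψ, BetaComp χ ψ → ψ ∉ Δ := fun ψ hc hm => hno ψ hc hm
    have heq := hsat _ (CSEStep.fe (FEStep.beta hΔ hχ hβ hnone))
    have hΔ' : Δ ∈ (F \ {Δ}) ∪
        {Δ' | (∃ ψ, BetaComp χ ψ ∧ Δ' = insert ψ Δ) ∧ ¬ PatInc Δ'} := heq.symm ▸ hΔ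
    rcases hΔ' with hd | ⟨⟨ψ, hc, he⟩, -⟩
    · exact absurd rfl hd.2
    · exact hnone ψ hc (by rw [he]; exact Set.mem_insert _ _)
  · -- D-cuts
    intro ψ hψ A φ hsub hc
    have heq := hsat _ (CSEStep.cutD hΔ hψ hsub hc)
    have hΔ' : Δ ∈ (F \ {Δ}) ∪
        {Δ' | (Δ' = insert (Formula.D A φ) Δ ∨
               Δ' = insert (Formula.neg (Formula.D A φ)) Δ) ∧ ¬ PatInc Δ'} := heq.symm ▸ hΔ
    rcases hΔ' with hd | ⟨he | he, -⟩
    · exact absurd rfl hd.2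
    · exact Or.inl (by rw [he]; exact Set.mem_insert _ _)
    · exact Or.inr (by rw [he]; exact Set.mem_insert _ _)
  · -- C-cuts
    intro ψ hψ A φ hsub hc
    have heq := hsat _ (CSEStep.cutC hΔ hψ hsub hc)
    have hΔ' : Δ ∈ (F \ {Δ}) ∪
        {Δ' | (Δ' = insert (Formula.C A φ) Δ ∨
               Δ' = insert (Formula.neg (Formula.C A φ)) Δ) ∧ ¬ PatInc Δ'} := heq.symm ▸ hΔ
    rcases hΔ' with hd | ⟨he | he, -⟩
    · exact absurd rfl hd.2
    · exact Or.inl (by rw [he]; exact Set.mem_insert _ _)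
    · exact Or.inr (by rw [he]; exact Set.mem_insert _ _)

lemma state_props {θ Δ} (h : IsState (specC1 (Agent := Agent) (AP := AP)) specC2 θ Δ) :
    FullyExpandedSet Δ ∧ CutSatD specC1 Δ ∧ CutSatC specC2 Δ := by
  cases h with
  | sr hpre hcse => exact cse_state_props hcse
/-! ### The invariant for the key lemma -/

/-- `InvF Δp E ζ`: relevant `D`- and `C`-subformulas are decided in the parent state
`Δp` (or trace back to a common-knowledge formula). -/
def InvF (Δp : Set (Formula Agent AP)) (E : Coalition Agent) (ζ : Formula Agent AP) : Prop :=
  (∀ (B : Coalition Agent) (δ : Formula Agent AP), ζ = Formula.D B δ → B.1 ⊆ E.1 →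
     Formula.D B δ ∈ Δp ∨ Formula.neg (Formula.D B δ) ∈ Δp ∨
     ∃ (a : Agent) (A : Coalition Agent) (φ : Formula Agent AP),
       a ∈ A.1 ∧ B = single a ∧ δ = Formula.C A φ) ∧
  (∀ (A : Coalition Agent) (φ : Formula Agent AP), ζ = Formula.C A φ →
     (∃ a, a ∈ A.1 ∧ a ∈ E.1) →
     Formula.C A φ ∈ Δp ∨ Formula.neg (Formula.C A φ) ∈ Δp)

def SInv (Δp : Set (Formula Agent AP)) (E : Coalition Agent) (ξ : Formula Agent AP) : Prop :=
  ∀ ζ ∈ subf ξ, InvF Δp E ζ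

lemma invF_neg {Δp : Set (Formula Agent AP)} {E : Coalition Agent} (φ : Formula Agent AP) :
    InvF Δp E (Formula.neg φ) := by
  constructor
  · intro B δ h; simp at h
  · intro A δ h; simp at h

lemma invF_DC {Δp : Set (Formula Agent AP)} {E : Coalition Agent} {a : Agent}
    {A : Coalition Agent} {φ : Formula Agent AP} (ha : a ∈ A.1) :
    InvF Δp E (Formula.D (single a) (Formula.C A φ)) := by
  constructor
  · intro B δ h _
    rw [Formula.D.injEq] at h
    exact Or.inr (Or.inr ⟨a, A, φ, ha, h.1.symm, h.2.symm⟩)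
  · intro A' φ' h; simp at h

lemma sinv_of_subf {Δp : Set (Formula Agent AP)} {E : Coalition Agent}
    {ξ ζ : Formula Agent AP} (h : ζ ∈ subf ξ) (hi : SInv Δp E ξ) : SInv Δp E ζ :=
  fun ζ' hζ' => hi ζ' (subf_trans h hζ')

lemma sinv_neg {Δp : Set (Formula Agent AP)} {E : Coalition Agent}
    {ξ : Formula Agent AP} (h : SInv Δp E ξ) : SInv Δp E (Formula.neg ξ) := by
  intro ζ hζ
  rcases (by simpa [subf] using hζ : ζ = Formula.neg ξ ∨ ζ ∈ subf ξ) with rfl | hζ'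
  · exact invF_neg ξ
  · exact h ζ hζ'

lemma sinv_alpha {Δp : Set (Formula Agent AP)} {E : Coalition Agent}
    {χ0 ξ : Formula Agent AP} (hc : AlphaComp χ0 ξ) (h : SInv Δp E χ0) : SInv Δp E ξ := by
  cases hc with
  | negneg φ => exact sinv_of_subf (by simp [subf, mem_subf_self]) h
  | conjL φ ψ => exact sinv_of_subf (by simp [subf, mem_subf_self]) h
  | conjR φ ψ => exact sinv_of_subf (by simp [subf, mem_subf_self]) h
  | dSelf A φ => exact h
  | dComp A φ => exact sinv_of_subf (by simp [subf, mem_subf_self]) h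
  | cComp A φ => exact sinv_of_subf (by simp [subf, mem_subf_self]) h
  | @cD A φ a ha =>
      intro ζ hζ
      rcases (by simpa [subf] using hζ :
          ζ = Formula.D (single a) (Formula.C A φ) ∨ ζ ∈ subf (Formula.C A φ)) with rfl | hζ'
      · exact invF_DC ha
      · exact h ζ hζ'

lemma sinv_beta {Δp : Set (Formula Agent AP)} {E : Coalition Agent}
    {χ0 ξ : Formula Agent AP} (hc : BetaComp χ0 ξ) (h : SInv Δp E χ0) : SInv Δp E ξ := by
  cases hc with
  | nconjL φ ψ =>
      exact sinv_neg (sinv_of_subf (by simp [subf, mem_subf_self]) h)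
  | nconjR φ ψ =>
      exact sinv_neg (sinv_of_subf (by simp [subf, mem_subf_self]) h)
  | ncComp A φ =>
      exact sinv_neg (sinv_of_subf (by simp [subf, mem_subf_self]) h)
  | @ncD A φ a ha =>
      intro ζ hζ
      rcases (by simpa [subf] using hζ :
          ζ = Formula.neg (Formula.D (single a) (Formula.C A φ)) ∨
          ζ = Formula.D (single a) (Formula.C A φ) ∨ ζ ∈ subf (Formula.C A φ)) with rfl | rfl | hζ'
      · exact invF_neg _
      · exact invF_DC ha
      · exact h ζ (show ζ ∈ subf (Formula.neg (Formula.C A φ)) from Set.mem_insert_of_mem _ hζ')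

/-! ### DRset membership -/

lemma mem_DRset_neg {E : Coalition Agent} {χ : Formula Agent AP}
    {Δp : Set (Formula Agent AP)} : Formula.neg χ ∈ DRset E χ Δp :=
  Or.inl (Or.inl (Or.inl rfl))

lemma mem_DRset_D {E B : Coalition Agent} {χ δ : Formula Agent AP}
    {Δp : Set (Formula Agent AP)} (h : Formula.D B δ ∈ Δp) (hBE : B.1 ⊆ E.1) :
    Formula.D B δ ∈ DRset E χ Δp :=
  Or.inl (Or.inl (Or.inr ⟨h, B, δ, rfl, hBE⟩))

lemma mem_DRset_negD {E B : Coalition Agent} {χ δ : Formula Agent AP}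
    {Δp : Set (Formula Agent AP)} (h : Formula.neg (Formula.D B δ) ∈ Δp) (hBE : B.1 ⊆ E.1)
    (hne : Formula.neg (Formula.D B δ) ≠ Formula.neg (Formula.D E χ)) :
    Formula.neg (Formula.D B δ) ∈ DRset E χ Δp :=
  Or.inl (Or.inr ⟨h, B, δ, rfl, hBE, hne⟩)

lemma mem_DRset_negC {E A : Coalition Agent} {χ φ : Formula Agent AP}
    {Δp : Set (Formula Agent AP)} (h : Formula.neg (Formula.C A φ) ∈ Δp)
    (ha : ∃ a, a ∈ A.1 ∧ a ∈ E.1) :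
    Formula.neg (Formula.C A φ) ∈ DRset E χ Δp :=
  Or.inr ⟨h, A, φ, rfl, ha⟩
/-! ### Cut decisions in a state with a `¬D_E χ` member -/

section Key
variable {Δp : Set (Formula Agent AP)} {E : Coalition Agent} {χ : Formula Agent AP}

lemma hostD (hDp : CutSatD (specC1 (Agent := Agent) (AP := AP)) Δp)
    (hneg : Formula.neg (Formula.D E χ) ∈ Δp)
    {ψ0 : Formula Agent AP} (hψ0 : ψ0 ∈ Δp)
    (hshape : (∃ (B' : Coalition Agent) (δ' : Formula Agent AP),
        (ψ0 = Formula.D B' δ' ∨ ψ0 = Formula.neg (Formula.D B' δ')) ∧ B'.1 ⊆ E.1) ∨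
      (∃ (B' : Coalition Agent) (δ' : Formula Agent AP),
        ψ0 = Formula.neg (Formula.C B' δ') ∧ ∃ a, a ∈ B'.1 ∧ a ∈ E.1))
    {B : Coalition Agent} {δ : Formula Agent AP}
    (hsub : Formula.D B δ ∈ subf ψ0) (hBE : B.1 ⊆ E.1) :
    Formula.D B δ ∈ Δp ∨ Formula.neg (Formula.D B δ) ∈ Δp := by
  refine hDp ψ0 hψ0 B δ hsub ⟨B, δ, rfl, ?_⟩
  rcases hshape with ⟨B', δ', hf, hBE'⟩ | ⟨B', δ', hf, ha⟩
  · exact Or.inl ⟨B', δ', hf, E, χ, hneg, hBE, hBE'⟩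
  · exact Or.inr ⟨B', δ', hf, E, χ, hneg, hBE, ha⟩

lemma hostC (hCp : CutSatC (specC2 (Agent := Agent) (AP := AP)) Δp)
    (hneg : Formula.neg (Formula.D E χ) ∈ Δp)
    {ψ0 : Formula Agent AP} (hψ0 : ψ0 ∈ Δp)
    (hshape : (∃ (B' : Coalition Agent) (δ' : Formula Agent AP),
        (ψ0 = Formula.D B' δ' ∨ ψ0 = Formula.neg (Formula.D B' δ')) ∧ B'.1 ⊆ E.1) ∨
      (∃ (B' : Coalition Agent) (δ' : Formula Agent AP),
        ψ0 = Formula.neg (Formula.C B' δ') ∧ ∃ a, a ∈ B'.1 ∧ a ∈ E.1))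
    {A : Coalition Agent} {φ : Formula Agent AP}
    (hsub : Formula.C A φ ∈ subf ψ0) (hAE : ∃ a, a ∈ A.1 ∧ a ∈ E.1) :
    Formula.C A φ ∈ Δp ∨ Formula.neg (Formula.C A φ) ∈ Δp := by
  refine hCp ψ0 hψ0 A φ hsub ⟨A, φ, rfl, ?_⟩
  rcases hshape with ⟨B', δ', hf, hBE'⟩ | ⟨B', δ', hf, ha⟩
  · exact Or.inl ⟨B', δ', hf, E, χ, hneg, hBE', hAE⟩
  · exact Or.inr ⟨B', δ', hf, E, χ, hneg, hAE, ha⟩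

/-- The invariant holds for the seed prestate `DRset E χ Δp`. -/
lemma inv_seed (hDp : CutSatD (specC1 (Agent := Agent) (AP := AP)) Δp)
    (hCp : CutSatC (specC2 (Agent := Agent) (AP := AP)) Δp)
    (hneg : Formula.neg (Formula.D E χ) ∈ Δp) :
    ∀ ξ ∈ DRset E χ Δp, SInv Δp E ξ := by
  intro ξ hξ
  have main : ∀ (ψ0 : Formula Agent AP), ψ0 ∈ Δp →
      ((∃ (B' : Coalition Agent) (δ' : Formula Agent AP),
        (ψ0 = Formula.D B' δ' ∨ ψ0 = Formula.neg (Formula.D B' δ')) ∧ B'.1 ⊆ E.1) ∨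
      (∃ (B' : Coalition Agent) (δ' : Formula Agent AP),
        ψ0 = Formula.neg (Formula.C B' δ') ∧ ∃ a, a ∈ B'.1 ∧ a ∈ E.1)) →
      ∀ ζ ∈ subf ψ0, InvF Δp E ζ := by
    intro ψ0 hψ0 hshape ζ hζ
    constructor
    · intro B δ heq hBE
      subst heq
      rcases hostD hDp hneg hψ0 hshape hζ hBE with h | h
      · exact Or.inl h
      · exact Or.inr (Or.inl h)
    · intro A φ heq hAE
      subst heq
      exact hostC hCp hneg hψ0 hshape hζ hAE
  rcases hξ with ((hone | hD) | hnD) | hnC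
  · -- ξ = ¬χ
    rcases hone with rfl
    intro ζ hζ
    rcases (by simpa [subf] using hζ : ζ = Formula.neg χ ∨ ζ ∈ subf χ) with rfl | hζ'
    · exact invF_neg χ
    · refine main (Formula.neg (Formula.D E χ)) hneg
        (Or.inl ⟨E, χ, Or.inr rfl, subset_rfl⟩) ζ ?_
      exact Set.mem_insert_of_mem _ (Set.mem_insert_of_mem _ hζ')
  · obtain ⟨hmem, A', ψ', rfl, hA'E⟩ := hD
    exact main _ hmem (Or.inl ⟨A', ψ', Or.inl rfl, hA'E⟩)
  · obtain ⟨hmem, A', ψ', rfl, hA'E, -⟩ := hnD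
    exact main _ hmem (Or.inl ⟨A', ψ', Or.inr rfl, hA'E⟩)
  · obtain ⟨hmem, A', ψ', rfl, ha⟩ := hnC
    exact main _ hmem (Or.inr ⟨A', ψ', rfl, ha⟩)

/-- The invariant is maintained by the cut-saturated-expansion procedure. -/
lemma inv_all (hDp : CutSatD (specC1 (Agent := Agent) (AP := AP)) Δp)
    (hCp : CutSatC (specC2 (Agent := Agent) (AP := AP)) Δp)
    (hneg : Formula.neg (Formula.D E χ) ∈ Δp)
    {Δ' : Set (Formula Agent AP)} (hΔ' : Δ' ∈ CSE specC1 specC2 (DRset E χ Δp)) :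
    ∀ ξ ∈ Δ', SInv Δp E ξ := by
  refine cse_mem_prop (fun Φ => ∀ ξ ∈ Φ, SInv Δp E ξ)
    (fun _ => inv_seed hDp hCp hneg) ?_ hΔ'
  intro F F' hst ih Φ hΦ
  rcases csestep_mem hst Φ hΦ with hF | ⟨Φ0, hΦ0, hsub, -, hgen⟩
  · exact ih _ hF
  · intro ξ hξ
    rcases hgen ξ hξ with h0 | ⟨χ0, hχ0, hA⟩ | ⟨χ0, hχ0, hB⟩ | ⟨A, φ, hm, rfl⟩ |
      ⟨ψ, hψm, A, φ, hsubf, heq⟩ | ⟨ψ, hψm, A, φ, hsubf, heq⟩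
    · exact ih _ hΦ0 _ h0
    · exact sinv_alpha hA (ih _ hΦ0 _ hχ0)
    · exact sinv_beta hB (ih _ hΦ0 _ hχ0)
    · refine sinv_neg ?_
      refine sinv_of_subf ?_ (ih _ hΦ0 _ hm)
      exact Set.mem_insert_of_mem _ (Set.mem_insert_of_mem _ (mem_subf_self φ))
    · rcases heq with rfl | rfl
      · exact sinv_of_subf hsubf (ih _ hΦ0 _ hψm)
      · exact sinv_neg (sinv_of_subf hsubf (ih _ hΦ0 _ hψm))
    · rcases heq with rfl | rfl
      · exact sinv_of_subf hsubf (ih _ hΦ0 _ hψm)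
      · exact sinv_neg (sinv_of_subf hsubf (ih _ hΦ0 _ hψm))

variable {Δ' : Set (Formula Agent AP)}

/-- Key lemma, `C`-version, backward direction. -/
lemma keyC_back (hDp : CutSatD (specC1 (Agent := Agent) (AP := AP)) Δp)
    (hCp : CutSatC (specC2 (Agent := Agent) (AP := AP)) Δp)
    (hneg : Formula.neg (Formula.D E χ) ∈ Δp)
    (hΔ' : Δ' ∈ CSE specC1 specC2 (DRset E χ Δp))
    {A : Coalition Agent} {φ : Formula Agent AP}
    (hmem : Formula.C A φ ∈ Δ') (hAE : ∃ a, a ∈ A.1 ∧ a ∈ E.1) :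
    Formula.C A φ ∈ Δp := by
  have hinv := (inv_all hDp hCp hneg hΔ' _ hmem _ (mem_subf_self _)).2 A φ rfl hAE
  rcases hinv with h | h
  · exact h
  · exfalso
    obtain ⟨hsubΔ', hpi⟩ := cse_props hΔ'
    exact hpi ⟨Formula.C A φ, hmem, hsubΔ' (mem_DRset_negC h hAE)⟩

/-- Key lemma, `D`-version. -/
lemma keyD (hfullp : FullyExpandedSet Δp)
    (hDp : CutSatD (specC1 (Agent := Agent) (AP := AP)) Δp)
    (hCp : CutSatC (specC2 (Agent := Agent) (AP := AP)) Δp)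
    (hneg : Formula.neg (Formula.D E χ) ∈ Δp)
    (hΔ' : Δ' ∈ CSE specC1 specC2 (DRset E χ Δp))
    (hfull' : FullyExpandedSet Δ')
    {B : Coalition Agent} {δ : Formula Agent AP} (hBE : B.1 ⊆ E.1) :
    Formula.D B δ ∈ Δp ↔ Formula.D B δ ∈ Δ' := by
  obtain ⟨hsubΔ', hpi'⟩ := cse_props hΔ'
  constructor
  · intro h
    exact hsubΔ' (mem_DRset_D h hBE)
  · intro hmem
    have hinv := (inv_all hDp hCp hneg hΔ' _ hmem _ (mem_subf_self _)).1 B δ rfl hBE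
    rcases hinv with h | h | ⟨a, A, φ, ha, rfl, rfl⟩
    · exact h
    · -- ¬D_B δ ∈ Δp : contradiction
      exfalso
      by_cases he : Formula.neg (Formula.D B δ) = Formula.neg (Formula.D E χ)
      · have h1 : B = E ∧ δ = χ := by
          rw [Formula.neg.injEq, Formula.D.injEq] at he
          exact he
        obtain ⟨rfl, rfl⟩ := h1
        have hδ' : δ ∈ Δ' := hfull'.2.1 _ hmem _ (AlphaComp.dComp B δ)
        exact hpi' ⟨δ, hδ', hsubΔ' mem_DRset_neg⟩
      · exact hpi' ⟨Formula.D B δ, hmem, hsubΔ' (mem_DRset_negD h hBE he)⟩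
    · -- traced to a common knowledge formula
      have hC' : Formula.C A φ ∈ Δ' := hfull'.2.1 _ hmem _ (AlphaComp.dComp _ _)
      have haE : a ∈ E.1 := hBE (by simp [single])
      have hCp' : Formula.C A φ ∈ Δp := keyC_back hDp hCp hneg hΔ' hC' ⟨a, ha, haE⟩
      exact hfullp.2.1 _ hCp' _ (AlphaComp.cD A φ ha)

end Key
/-! ### Final tableau facts -/

section Final
variable {C1 C2 : CutCond Agent AP} {θ : Formula Agent AP}
  {S : Set (Set (Formula Agent AP))}

lemma elim_reach_subset {X Y : Set (Set (Formula Agent AP))}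
    (h : Relation.ReflTransGen (ElimStep C1 C2 θ) X Y) : Y ⊆ X := by
  induction h with
  | refl => exact subset_rfl
  | tail _ hst ih =>
      cases hst with
      | e1 hΔ hin hno => exact Set.diff_subset.trans ih
      | e2 hΔ hin hno => exact Set.diff_subset.trans ih

lemma final_subset (hfin : FinalTableau C1 C2 θ S) :
    ∀ Δ ∈ S, IsState C1 C2 θ Δ :=
  elim_reach_subset hfin.1

lemma final_succ (hfin : FinalTableau C1 C2 θ S) {Δ : Set (Formula Agent AP)}
    {A : Coalition Agent} {φ : Formula Agent AP}
    (hΔ : Δ ∈ S) (hin : Formula.neg (Formula.D A φ) ∈ Δ) :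
    ∃ Δ' ∈ S, InitArrow C1 C2 θ Δ A φ Δ' := by
  by_contra hno
  push_neg at hno
  exact hfin.2 _ (ElimStep.e1 hΔ hin hno)

lemma final_realize (hfin : FinalTableau C1 C2 θ S) {Δ : Set (Formula Agent AP)}
    {A : Coalition Agent} {φ : Formula Agent AP}
    (hΔ : Δ ∈ S) (hin : Formula.neg (Formula.C A φ) ∈ Δ) :
    RealizePath C1 C2 θ S (fun _ => True) A φ Δ := by
  by_contra hno
  exact hfin.2 _ (ElimStep.e2 hΔ hin hno)

end Final

/-! ### The tree model -/

abbrev TEdge (Agent AP : Type) : Type := Coalition Agent × Set (Formula Agent AP)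

/-- The tableau state at the tip of a path (paths are stored tip-first). -/
def pstate (Δ0 : Set (Formula Agent AP)) : List (TEdge Agent AP) → Set (Formula Agent AP)
  | [] => Δ0
  | e :: _ => e.2

/-- Valid paths in the final tableau, starting at `Δ0`, stored tip-first. -/
def ValidL (θ : Formula Agent AP) (S : Set (Set (Formula Agent AP)))
    (Δ0 : Set (Formula Agent AP)) : List (TEdge Agent AP) → Prop
  | [] => True
  | e :: t => ValidL θ S Δ0 t ∧ e.2 ∈ S ∧
      ∃ ψ, InitArrow specC1 specC2 θ (pstate Δ0 t) e.1 ψ e.2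

attribute [local instance] Classical.propDecidable

/-- Drop the maximal tip-segment of the path all of whose edges have a label
including `A`. -/
noncomputable def dropC (A : Coalition Agent) : List (TEdge Agent AP) → List (TEdge Agent AP)
  | [] => []
  | e :: t => if A.1 ⊆ e.1.1 then dropC A t else e :: t

lemma dropC_valid {θ : Formula Agent AP} {S : Set (Set (Formula Agent AP))}
    {Δ0 : Set (Formula Agent AP)} (A : Coalition Agent) :
    ∀ {l : List (TEdge Agent AP)}, ValidL θ S Δ0 l → ValidL θ S Δ0 (dropC A l) := by
  intro l
  induction l with
  | nil => exact fun h => h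
  | cons e t ih =>
      intro h
      rw [dropC]
      split
      · exact ih h.1
      · exact h

lemma dropC_length (A : Coalition Agent) :
    ∀ l : List (TEdge Agent AP), (dropC A l).length ≤ l.length := by
  intro l
  induction l with
  | nil => simp [dropC]
  | cons e t ih =>
      rw [dropC]
      split
      · exact ih.trans (by simp)
      · simp

lemma dropC_suffix (A : Coalition Agent) :
    ∀ l : List (TEdge Agent AP), dropC A l <:+ l := by
  intro l
  induction l with
  | nil => simp [dropC]
  | cons e t ih =>
      rw [dropC]
      split
      · exact ih.trans (List.suffix_cons e t)
      · exact List.suffix_refl _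

lemma dropC_mono {A B : Coalition Agent} (hBA : B.1 ⊆ A.1) :
    ∀ l : List (TEdge Agent AP), dropC B (dropC A l) = dropC B l := by
  intro l
  induction l with
  | nil => simp [dropC]
  | cons e t ih =>
      rw [dropC]
      split
      · rename_i hA
        rw [ih, dropC, if_pos (hBA.trans hA)]
      · rfl

lemma dropC_single {a : Agent} {e : TEdge Agent AP} :
    (single a).1 ⊆ e.1.1 ↔ a ∈ e.1.1 := by
  simp [single]

lemma dropC_max (A : Coalition Agent) (l : List (TEdge Agent AP)) :
    ∃ a ∈ A.1, dropC A l = dropC (single a) l ∧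
      ∀ b ∈ A.1, (dropC (single b) l).length ≤ (dropC (single a) l).length := by
  induction l with
  | nil =>
      obtain ⟨a, ha⟩ := A.2
      exact ⟨a, ha, by simp [dropC], fun b _ => by simp [dropC]⟩
  | cons e t ih =>
      by_cases hA : A.1 ⊆ e.1.1
      · obtain ⟨a, ha, h1, h2⟩ := ih
        refine ⟨a, ha, ?_, ?_⟩
        · rw [dropC, if_pos hA, dropC, if_pos (dropC_single.mpr (hA ha)), h1]
        · intro b hb
          rw [dropC, if_pos (dropC_single.mpr (hA hb)), dropC, if_pos (dropC_single.mpr (hA ha))]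
          exact h2 b hb
      · obtain ⟨a, ha, hnot⟩ : ∃ a ∈ A.1, a ∉ e.1.1 := by
          by_contra h
          push_neg at h
          exact hA h
        refine ⟨a, ha, ?_, ?_⟩
        · rw [dropC, if_neg hA, dropC, if_neg (fun h => hnot (dropC_single.mp h))]
        · intro b hb
          have hEq : dropC (single a) (e :: t) = e :: t := by
            rw [dropC, if_neg (fun h => hnot (dropC_single.mp h))]
          rw [hEq]
          exact dropC_length _ _
      
lemma suffix_eq_of_length {α : Type} {l l1 l2 : List α}
    (h1 : l1 <:+ l) (h2 : l2 <:+ l) (hl : l1.length = l2.length) : l1 = l2 := by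
  obtain ⟨u, rfl⟩ := h1
  obtain ⟨v, hv⟩ := h2
  have hlen : v.length = u.length := by
    have := congrArg List.length hv
    simp at this
    omega
  exact (List.append_inj hv.symm (by omega)).2
lemma dropC_inter {A : Coalition Agent} {n m : List (TEdge Agent AP)}
    (h : ∀ a ∈ A.1, dropC (single a) n = dropC (single a) m) :
    dropC A n = dropC A m := by
  obtain ⟨a1, ha1, hn1, hmax1⟩ := dropC_max A n
  obtain ⟨a2, ha2, hm2, hmax2⟩ := dropC_max A m
  have h1 : (dropC (single a1) m).length = (dropC (single a2) m).length := by
    have e1 : (dropC (single a2) m).length ≤ (dropC (single a1) m).length := by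
      rw [← h a1 ha1, ← h a2 ha2]
      exact hmax1 a2 ha2
    exact le_antisymm (hmax2 a1 ha1) e1
  have h2 : dropC (single a1) m = dropC (single a2) m :=
    suffix_eq_of_length (dropC_suffix _ m) (dropC_suffix _ m) h1
  rw [hn1, hm2, ← h2, h a1 ha1]

/-- The tree model over the final tableau. -/
noncomputable def mdl (θ : Formula Agent AP) (S : Set (Set (Formula Agent AP)))
    (Δ0 : Set (Formula Agent AP)) : CMAEM Agent AP where
  State := {l : List (TEdge Agent AP) // ValidL θ S Δ0 l}
  nonempty := ⟨⟨[], trivial⟩⟩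
  RD A n m := dropC A n.1 = dropC A m.1
  equiv A := ⟨fun _ => rfl, Eq.symm, Eq.trans⟩
  mono A B hBA s t h := by
    show dropC B s.1 = dropC B t.1
    rw [← dropC_mono hBA s.1, h, dropC_mono hBA]
  label n := {p | Formula.atom p ∈ pstate Δ0 n.1}
  inter A s t := by
    constructor
    · intro h a ha
      have hsub : (single a).1 ⊆ A.1 := Finset.singleton_subset_iff.mpr ha
      show dropC (single a) s.1 = dropC (single a) t.1
      rw [← dropC_mono hsub s.1, show dropC A s.1 = dropC A t.1 from h, dropC_mono hsub]
    · intro h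
      exact dropC_inter h
section Truth
variable {θ : Formula Agent AP} {S : Set (Set (Formula Agent AP))}
  {Δ0 : Set (Formula Agent AP)}

lemma pstate_mem_S (hΔ0 : Δ0 ∈ S) :
    ∀ {l : List (TEdge Agent AP)}, ValidL θ S Δ0 l → pstate Δ0 l ∈ S := by
  intro l hv
  cases l with
  | nil => exact hΔ0
  | cons e t => exact hv.2.1

lemma mem_dropC_iff (A : Coalition Agent) (φ : Formula Agent AP) :
    ∀ {l : List (TEdge Agent AP)}, ValidL θ S Δ0 l →
      (Formula.D A φ ∈ pstate Δ0 l ↔ Formula.D A φ ∈ pstate Δ0 (dropC A l)) := by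
  intro l
  induction l with
  | nil => exact fun _ => Iff.rfl
  | cons e t ih =>
      intro hv
      obtain ⟨hvt, heS, ψ, harr⟩ := hv
      by_cases hA : A.1 ⊆ e.1.1
      · rw [dropC, if_pos hA]
        have hp := state_props harr.1
        have hfull' : FullyExpandedSet e.2 := (cse_state_props harr.2.2).1
        have hkey := keyD hp.1 hp.2.1 hp.2.2 harr.2.1 harr.2.2 hfull' (B := A) (δ := φ) hA
        exact (hkey.symm).trans (ih hvt)
      · rw [dropC, if_neg hA]

lemma invD {A : Coalition Agent} {φ : Formula Agent AP}
    {n m : (mdl θ S Δ0).State} (h : (mdl θ S Δ0).RD A n m) :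
    (Formula.D A φ ∈ pstate Δ0 n.1 ↔ Formula.D A φ ∈ pstate Δ0 m.1) := by
  have hd : dropC A n.1 = dropC A m.1 := h
  rw [mem_dropC_iff A φ n.2, hd, ← mem_dropC_iff A φ m.2]

lemma realize_head_mem {C1 C2 : CutCond Agent AP} {θ' : Formula Agent AP}
    {S' : Set (Set (Formula Agent AP))} {P} {A : Coalition Agent}
    {φ : Formula Agent AP} {Δ : Set (Formula Agent AP)}
    (h : RealizePath C1 C2 θ' S' P A φ Δ) : Δ ∈ S' := by
  cases h with
  | base hS hP h => exact hS
  | step hS hP hev ha harr h => exact hS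

lemma realize_node {A : Coalition Agent} {φ : Formula Agent AP}
    {Δ : Set (Formula Agent AP)}
    (h : RealizePath specC1 specC2 θ S (fun _ => True) A φ Δ) :
    ∀ n : (mdl θ S Δ0).State, pstate Δ0 n.1 = Δ →
    ∃ t : (mdl θ S Δ0).State, (mdl θ S Δ0).RC A n t ∧ Formula.neg φ ∈ pstate Δ0 t.1 := by
  induction h with
  | @base Δc hS hP hφ =>
      intro n hn
      exact ⟨n, Relation.ReflTransGen.refl, by rw [hn]; exact hφ⟩
  | @step Δc Δ' hS hP hev a ha ψ harr h ih =>
      intro n hn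
      have hΔ'S : Δ' ∈ S := realize_head_mem h
      have hval : ValidL θ S Δ0 ((single a, Δ') :: n.1) :=
        ⟨n.2, hΔ'S, ψ, by rw [hn]; exact harr⟩
      let n' : (mdl θ S Δ0).State := ⟨(single a, Δ') :: n.1, hval⟩
      obtain ⟨t, hrc, hφt⟩ := ih n' rfl
      refine ⟨t, Relation.ReflTransGen.head ⟨single a, Finset.singleton_subset_iff.mpr ha, ?_⟩ hrc, hφt⟩
      show dropC (single a) n.1 = dropC (single a) ((single a, Δ') :: n.1)
      rw [dropC, if_pos subset_rfl]

lemma truth (hfin : FinalTableau specC1 specC2 θ S) (hΔ0 : Δ0 ∈ S) :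
    ∀ (N : ℕ) (ξ : Formula Agent AP), ξ.length ≤ N →
      ∀ n : (mdl θ S Δ0).State, ξ ∈ pstate Δ0 n.1 → (mdl θ S Δ0).sat n ξ := by
  intro N
  induction N with
  | zero =>
      intro ξ hlen
      have := ξ.length_pos
      omega
  | succ N ih =>
    intro ξ hlen n hmem
    have hSn : pstate Δ0 n.1 ∈ S := pstate_mem_S hΔ0 n.2
    have hst := state_props (final_subset hfin _ hSn)
    have hfull := hst.1
    have fullOf : ∀ m : (mdl θ S Δ0).State, FullyExpandedSet (pstate Δ0 m.1) :=
      fun m => (state_props (final_subset hfin _ (pstate_mem_S hΔ0 m.2))).1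
    cases ξ with
    | atom p =>
        show Formula.atom p ∈ pstate Δ0 n.1
        exact hmem
    | conj φ ψ =>
        have h1 := hfull.2.1 _ hmem _ (AlphaComp.conjL φ ψ)
        have h2 := hfull.2.1 _ hmem _ (AlphaComp.conjR φ ψ)
        simp only [Formula.length] at hlen
        have hp1 := (Formula.length_pos φ); have hp2 := (Formula.length_pos ψ)
        exact ⟨ih φ (by omega) n h1, ih ψ (by omega) n h2⟩
    | D A φ =>
        intro t hRD
        have hmem' : Formula.D A φ ∈ pstate Δ0 t.1 := (invD hRD).mp hmem
        have hφ : φ ∈ pstate Δ0 t.1 := (fullOf t).2.1 _ hmem' _ (AlphaComp.dComp A φ)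
        simp only [Formula.length] at hlen
        exact ih φ (by omega) t hφ
    | C A φ =>
        intro t hRC
        have hCt : Formula.C A φ ∈ pstate Δ0 t.1 := by
          clear hlen
          induction hRC with
          | refl => exact hmem
          | @tail mid t' hr hstep ihc =>
              obtain ⟨B, hBA, hRD⟩ := hstep
              obtain ⟨a, haB⟩ := B.2
              have hDmem : Formula.D (single a) (Formula.C A φ) ∈ pstate Δ0 mid.1 :=
                (fullOf mid).2.1 _ ihc _ (AlphaComp.cD A φ (hBA haB))
              have hRDa : (mdl θ S Δ0).RD (single a) mid t' :=
                (mdl θ S Δ0).mono B (single a) (Finset.singleton_subset_iff.mpr haB) _ _ hRD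
              have := (invD hRDa).mp hDmem
              exact (fullOf t').2.1 _ this _ (AlphaComp.dComp _ _)
        have hφ : φ ∈ pstate Δ0 t.1 := (fullOf t).2.1 _ hCt _ (AlphaComp.cComp A φ)
        simp only [Formula.length] at hlen
        exact ih φ (by omega) t hφ
    | neg φ =>
      cases φ with
      | atom p =>
          intro hc
          exact hfull.1 ⟨Formula.atom p, hc, hmem⟩
      | neg φ' =>
          have hφ' := hfull.2.1 _ hmem _ (AlphaComp.negneg φ')
          simp only [Formula.length] at hlen
          have hsat := ih φ' (by omega) n hφ'
          exact fun hc => hc hsat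
      | conj φ ψ =>
          obtain ⟨ψc, hcomp, hmemc⟩ := hfull.2.2 _ hmem (by trivial)
          simp only [Formula.length] at hlen
          have hp1 := Formula.length_pos φ; have hp2 := Formula.length_pos ψ
          cases hcomp with
          | nconjL =>
              have hsat := ih (Formula.neg φ) (by simp [Formula.length]; omega) n hmemc
              exact fun hc => hsat hc.1
          | nconjR =>
              have hsat := ih (Formula.neg ψ) (by simp [Formula.length]; omega) n hmemc
              exact fun hc => hsat hc.2
      | D A φ =>
          obtain ⟨Δ', hΔ'S, harr⟩ := final_succ hfin hSn hmem
          have hval : ValidL θ S Δ0 ((A, Δ') :: n.1) := ⟨n.2, hΔ'S, φ, harr⟩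
          let n' : (mdl θ S Δ0).State := ⟨(A, Δ') :: n.1, hval⟩
          have hRD : (mdl θ S Δ0).RD A n n' := by
            show dropC A n.1 = dropC A ((A, Δ') :: n.1)
            rw [dropC, if_pos subset_rfl]
          have hφn' : Formula.neg φ ∈ pstate Δ0 n'.1 :=
            (cse_props harr.2.2).1 mem_DRset_neg
          simp only [Formula.length] at hlen
          have hsat := ih (Formula.neg φ) (by simp [Formula.length]; omega) n' hφn'
          intro hall
          exact hsat (hall n' hRD)
      | C A φ =>
          obtain ⟨t, hrc, hφt⟩ := realize_node (final_realize hfin hSn hmem) n rfl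
          simp only [Formula.length] at hlen
          have hsat := ih (Formula.neg φ) (by simp [Formula.length]; omega) t hφt
          intro hall
          exact hsat (hall t hrc)

end Truth
end Aux

/-- Completeness: with the specific restrictive cut conditions (C1),
(C2): if the final tableau `T^θ` is open, then θ is satisfiable in a CMAEM. -/
theorem statement18 {Agent AP : Type} [Fintype Agent] [Countable AP]
    (hcard : 1 < Fintype.card Agent)
    (θ : Formula Agent AP)
    (S : Set (Set (Formula Agent AP))) (hfin : FinalTableau specC1 specC2 θ S)
    (hopen : ∃ Δ ∈ S, θ ∈ Δ) :
    ∃ (M : CMAEM Agent AP) (s : M.State), M.sat s θ := by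
  obtain ⟨Δ0, hΔ0, hθ⟩ := hopen
  exact ⟨mdl θ S Δ0, ⟨[], trivial⟩, truth hfin hΔ0 θ.length θ le_rfl ⟨[], trivial⟩ hθ⟩
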